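/- arXiv:2402.06670 — 9 statements merged into one kernel-verified Lean document; each statement's English description precedes it below -/
import Mathlib

section
/- For real numbers l and a with 0 < a < l, the integral ∫_{0}^{π} min(a, l·|cos φ|) dφ equals 2l·(1 − √(1 − a²/l²)) + 2a·arccos(a/l). -/
open Real MeasureTheory Filter

/-- `A(l,a) = ∫_0^π min(a, l·|cos φ|) dφ` -/
noncomputable def A2 (l a : ℝ) : ℝ := ∫ φ in (0:ℝ)..π, min a (l * |Real.cos φ|)

/-- `B(l,b) = ∫_0^π min(b, l·sin φ) dφ` -/
noncomputable def B2 (l b : ℝ) : ℝ := ∫ φ in (0:ℝ)..π, min b (l * Real.sin φ)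

/-- `AB(l,a,b) = ∫_0^π min(a, l·|cos φ|)·min(b, l·sin φ) dφ` -/
noncomputable def AB2 (l a b : ℝ) : ℝ :=
  ∫ φ in (0:ℝ)..π, min a (l * |Real.cos φ|) * min b (l * Real.sin φ)

/-- Intersection probability for the 2D Buffon–Laplace needle problem. -/
noncomputable def P2 (l a b : ℝ) : ℝ :=
  (b * A2 l a + a * B2 l b - AB2 l a b) / (π * a * b)

/-- Intersection probability for the 2D spherocylinder Buffon–Laplace problem. -/
noncomputable def P2sc (l σ a b : ℝ) : ℝ :=
  ((b - σ) * A2 l (a - σ) + (a - σ) * B2 l (b - σ) - AB2 l (a - σ) (b - σ)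
    + (σ * a + σ * b - σ ^ 2) * π) / (π * a * b)

/-- `A³ᴰ(l,a) = ∫_0^{π/2} ∫_0^π min(a, l·sin ψ·|cos φ|) dφ dψ` -/
noncomputable def A3 (l a : ℝ) : ℝ :=
  ∫ ψ in (0:ℝ)..(π/2), ∫ φ in (0:ℝ)..π, min a (l * Real.sin ψ * |Real.cos φ|)

/-- `B³ᴰ(l,b) = ∫_0^{π/2} ∫_0^π min(b, l·sin ψ·sin φ) dφ dψ` -/
noncomputable def B3 (l b : ℝ) : ℝ :=
  ∫ ψ in (0:ℝ)..(π/2), ∫ φ in (0:ℝ)..π, min b (l * Real.sin ψ * Real.sin φ)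

/-- `AB³ᴰ(l,a,b) = ∫_0^{π/2} ∫_0^π min(a, l·sin ψ·|cos φ|)·min(b, l·sin ψ·sin φ) dφ dψ` -/
noncomputable def AB3 (l a b : ℝ) : ℝ :=
  ∫ ψ in (0:ℝ)..(π/2), ∫ φ in (0:ℝ)..π,
    min a (l * Real.sin ψ * |Real.cos φ|) * min b (l * Real.sin ψ * Real.sin φ)

/-- `S³ᴰ(l,a,b) = b·A³ᴰ(l,a) + a·B³ᴰ(l,b) − AB³ᴰ(l,a,b)` -/
noncomputable def S3 (l a b : ℝ) : ℝ := b * A3 l a + a * B3 l b - AB3 l a b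

/-- `F(α,β,t) = ∫_α^β √(sin²ψ − t²) dψ` -/
noncomputable def Faux (α β t : ℝ) : ℝ :=
  ∫ ψ in α..β, Real.sqrt (Real.sin ψ ^ 2 - t ^ 2)

/-- `G(α,β,t) = ∫_α^β (π/2 − arcsin(t / sin ψ)) dψ` -/
noncomputable def Gaux (α β t : ℝ) : ℝ :=
  ∫ ψ in α..β, (π / 2 - Real.arcsin (t / Real.sin ψ))

/-!
Since `|cos (π - φ)| = |cos φ|`, the integral over `[0, π]` is twice the one over `[0, π/2]`,
where `|cos φ| = cos φ` is decreasing. With `c = arccos (a / l)` the integrand is the constant `a`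
on `[0, c]` and `l cos φ` on `[c, π/2]`, contributing `a c` and `l (1 - sin c)`, and
`sin c = √(1 - a²/l²)`.
-/

open intervalIntegral

lemma integral_eq_two_mul_integral_half_of_symm {f : ℝ → ℝ} {T : ℝ}
    (hf : IntervalIntegrable f volume 0 T) (hsymm : ∀ x, f (T - x) = f x) :
    ∫ x in (0:ℝ)..T, f x = 2 * ∫ x in (0:ℝ)..T / 2, f x := by
  have hsub : ∀ u v, u ∈ Set.uIcc 0 T → v ∈ Set.uIcc 0 T →
      IntervalIntegrable f volume u v :=
    fun u v hu hv => hf.mono_set (Set.uIcc_subset_uIcc hu hv)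
  have hmid : T / 2 ∈ Set.uIcc 0 T := by
    rcases le_total 0 T with hT | hT
    · rw [Set.uIcc_of_le hT]; constructor <;> linarith
    · rw [Set.uIcc_of_ge hT]; constructor <;> linarith
  have hreflect : ∫ x in T / 2..T, f x = ∫ x in (0:ℝ)..T / 2, f x := by
    calc ∫ x in T / 2..T, f x = ∫ x in T / 2..T, f (T - x) := by simp only [hsymm]
      _ = ∫ x in (0:ℝ)..T / 2, f x := by
        rw [integral_comp_sub_left]; congr 1 <;> ring
  rw [← integral_add_adjacent_intervals (hsub 0 (T / 2) Set.left_mem_uIcc hmid)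
    (hsub (T / 2) T hmid Set.right_mem_uIcc), hreflect, two_mul]

lemma integral_min_mul_cos_zero_pi_div_two {l a : ℝ} (hl : 0 < l) (ha : 0 ≤ a) (hal : a ≤ l) :
    ∫ φ in (0:ℝ)..π / 2, min a (l * cos φ) =
      a * arccos (a / l) + l * (1 - √(1 - (a / l) ^ 2)) := by
  set c := arccos (a / l)
  have hc0 : 0 ≤ c := arccos_nonneg _
  have hcπ : c ≤ π / 2 := arccos_le_pi_div_two.mpr (div_nonneg ha hl.le)
  have hcos : cos c = a / l :=
    cos_arccos (by linarith [div_nonneg ha hl.le]) ((div_le_one hl).mpr hal)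
  have hcont : Continuous fun φ => min a (l * cos φ) := by fun_prop
  have hflat : ∫ φ in (0:ℝ)..c, min a (l * cos φ) = a * c := by
    rw [integral_congr (g := fun _ => a), intervalIntegral.integral_const, smul_eq_mul, sub_zero,
      mul_comm]
    intro φ hφ
    rw [Set.uIcc_of_le hc0] at hφ
    have : a / l ≤ cos φ := hcos ▸ cos_le_cos_of_nonneg_of_le_pi hφ.1 (by linarith) hφ.2
    exact min_eq_left (by rwa [div_le_iff₀' hl] at this)
  have hcosine : ∫ φ in c..π / 2, min a (l * cos φ) = l * (1 - sin c) := by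
    rw [integral_congr (g := fun φ => l * cos φ), intervalIntegral.integral_const_mul,
      integral_cos, sin_pi_div_two]
    intro φ hφ
    rw [Set.uIcc_of_le hcπ] at hφ
    have : cos φ ≤ a / l :=
      hcos ▸ cos_le_cos_of_nonneg_of_le_pi hc0 (by linarith [hφ.2, pi_pos]) hφ.1
    exact min_eq_right (by rwa [le_div_iff₀' hl] at this)
  rw [← integral_add_adjacent_intervals (hcont.intervalIntegrable 0 c)
    (hcont.intervalIntegrable c (π / 2)), hflat, hcosine, sin_arccos]

theorem stmt0 (l a : ℝ) (ha : 0 < a) (hal : a < l) :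
    A2 l a = 2 * l * (1 - Real.sqrt (1 - a ^ 2 / l ^ 2)) + 2 * a * Real.arccos (a / l) := by
  have hl : 0 < l := ha.trans hal
  have hsymm : ∀ φ, min a (l * |cos (π - φ)|) = min a (l * |cos φ|) := by
    simp only [cos_pi_sub, abs_neg, implies_true]
  have habs_cos : ∫ φ in (0:ℝ)..π / 2, min a (l * |cos φ|) =
      ∫ φ in (0:ℝ)..π / 2, min a (l * cos φ) := by
    refine integral_congr fun φ hφ => ?_
    rw [Set.uIcc_of_le (by positivity)] at hφ
    simp only [abs_of_nonneg (cos_nonneg_of_mem_Icc ⟨by linarith [pi_pos, hφ.1], hφ.2⟩)]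
  have hcont : Continuous fun φ => min a (l * |cos φ|) := by fun_prop
  rw [A2, integral_eq_two_mul_integral_half_of_symm (hcont.intervalIntegrable 0 π) hsymm,
    habs_cos, integral_min_mul_cos_zero_pi_div_two hl ha.le hal.le, div_pow]
  ring
end

section
/- For real numbers l and b with 0 < b < l, the integral ∫_{0}^{π} min(b, l·sin φ) dφ equals 2l·(1 − √(1 − b²/l²)) + 2b·(π/2 − arcsin(b/l)). -/
open Real MeasureTheory Filter

theorem stmt1 (l b : ℝ) (hb : 0 < b) (hbl : b < l) :
    B2 l b = 2 * l * (1 - Real.sqrt (1 - b ^ 2 / l ^ 2))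
      + 2 * b * (π / 2 - Real.arcsin (b / l)) := by
  rw [B2]
  have hl : 0 < l := hb.trans hbl
  set θ := Real.arcsin (b / l) with hθdef
  have hbl1 : b / l < 1 := (div_lt_one hl).2 hbl
  have hbl0 : 0 < b / l := div_pos hb hl
  have hθ0 : 0 < θ := Real.arcsin_pos.2 hbl0
  have hθπ2 : θ < π / 2 := Real.arcsin_lt_pi_div_two.2 hbl1
  have hsinθ : Real.sin θ = b / l := Real.sin_arcsin (by linarith) hbl1.le
  have hcosθ : Real.cos θ = Real.sqrt (1 - b ^ 2 / l ^ 2) := by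
    rw [hθdef, Real.cos_arcsin, div_pow]
  have hcont : Continuous fun φ : ℝ => min b (l * Real.sin φ) := continuous_const.min (continuous_const.mul Real.continuous_sin)
  have hint : ∀ x y : ℝ, IntervalIntegrable (fun φ => min b (l * Real.sin φ)) volume x y :=
    fun x y => hcont.intervalIntegrable x y
  have hπ : (0:ℝ) < π := Real.pi_pos
  -- key pointwise facts
  have hmin1 : ∀ φ ∈ Set.Icc (0:ℝ) θ, min b (l * Real.sin φ) = l * Real.sin φ := by
    intro φ hφ
    have hs : Real.sin φ ≤ Real.sin θ := by
      apply Real.sin_le_sin_of_le_of_le_pi_div_two (by linarith [hφ.1, hθ0, hθπ2]) hθπ2.le hφ.2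
    rw [min_eq_right]
    calc l * Real.sin φ ≤ l * Real.sin θ := by nlinarith
    _ = b := by rw [hsinθ]; field_simp
  have hmin2 : ∀ φ ∈ Set.Icc θ (π - θ), min b (l * Real.sin φ) = b := by
    intro φ hφ
    have hs : Real.sin θ ≤ Real.sin φ := by
      rcases le_total φ (π/2) with h | h
      · exact Real.sin_le_sin_of_le_of_le_pi_div_two (by linarith) h hφ.1
      · rw [← Real.sin_pi_sub φ]
        exact Real.sin_le_sin_of_le_of_le_pi_div_two (by linarith) (by linarith) (by linarith [hφ.2])
    rw [min_eq_left]
    calc b = l * Real.sin θ := by rw [hsinθ]; field_simp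
    _ ≤ l * Real.sin φ := by nlinarith
  have hmin3 : ∀ φ ∈ Set.Icc (π - θ) π, min b (l * Real.sin φ) = l * Real.sin φ := by
    intro φ hφ
    have hs : Real.sin φ ≤ Real.sin θ := by
      rw [← Real.sin_pi_sub φ]
      apply Real.sin_le_sin_of_le_of_le_pi_div_two (by linarith [hφ.2]) hθπ2.le (by linarith [hφ.1])
    rw [min_eq_right]
    calc l * Real.sin φ ≤ l * Real.sin θ := by nlinarith
    _ = b := by rw [hsinθ]; field_simp
  have I1 : (∫ φ in (0:ℝ)..θ, min b (l * Real.sin φ)) = l * (1 - Real.cos θ) := by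
    rw [intervalIntegral.integral_congr (g := fun φ => l * Real.sin φ)
      (by rw [Set.uIcc_of_le hθ0.le]; exact fun φ hφ => hmin1 φ hφ)]
    rw [intervalIntegral.integral_const_mul, integral_sin, Real.cos_zero]
  have I2 : (∫ φ in θ..(π - θ), min b (l * Real.sin φ)) = (π - 2 * θ) * b := by
    rw [intervalIntegral.integral_congr (g := fun _ => b)
      (by rw [Set.uIcc_of_le (by linarith)]; exact fun φ hφ => hmin2 φ hφ)]
    rw [intervalIntegral.integral_const, smul_eq_mul]; ring
  have I3 : (∫ φ in (π - θ)..π, min b (l * Real.sin φ)) = l * (1 - Real.cos θ) := by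
    rw [intervalIntegral.integral_congr (g := fun φ => l * Real.sin φ)
      (by rw [Set.uIcc_of_le (by linarith)]; exact fun φ hφ => hmin3 φ hφ)]
    rw [intervalIntegral.integral_const_mul, integral_sin, Real.cos_pi, Real.cos_pi_sub]
    ring
  have split : (∫ φ in (0:ℝ)..π, min b (l * Real.sin φ))
      = (∫ φ in (0:ℝ)..θ, min b (l * Real.sin φ))
      + (∫ φ in θ..(π - θ), min b (l * Real.sin φ))
      + (∫ φ in (π - θ)..π, min b (l * Real.sin φ)) := by
    rw [intervalIntegral.integral_add_adjacent_intervals (hint 0 θ) (hint θ (π - θ)),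
      intervalIntegral.integral_add_adjacent_intervals (hint 0 (π - θ)) (hint (π - θ) π)]
  rw [split, I1, I2, I3, hcosθ]
  ring
end

section
/- For real numbers l, a, b with 0 < b < l ≤ a, the integral ∫_{0}^{π} min(a, l·|cos φ|)·min(b, l·sin φ) dφ equals 2lb − b². -/
open Real MeasureTheory Filter

/-!
Since `l ≤ a`, the first factor is just `l |cos φ|`. The integrand is symmetric under
`φ ↦ π - φ`, so the integral is twice the one over `[0, π/2]`, where the substitution
`v = l sin φ` turns it into `∫₀ˡ min(b, v) dv = l b - b² / 2`.
-/

namespace intervalIntegral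

theorem integral_eq_two_mul_of_symm {f : ℝ → ℝ} {a b : ℝ}
    (hf : IntervalIntegrable f volume a b) (hsymm : ∀ x, f (a + b - x) = f x) :
    ∫ x in a..b, f x = 2 * ∫ x in a..(a + b) / 2, f x := by
  have hmid : (a + b) / 2 ∈ Set.uIcc a b := by
    rcases le_total a b with h | h
    · exact Set.mem_uIcc_of_le (by linarith) (by linarith)
    · exact Set.mem_uIcc_of_ge (by linarith) (by linarith)
  have hright : ∫ x in (a + b) / 2..b, f x = ∫ x in a..(a + b) / 2, f x := by
    calc ∫ x in (a + b) / 2..b, f x = ∫ x in (a + b) / 2..b, f (a + b - x) := by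
          simp only [hsymm]
      _ = ∫ x in a..(a + b) / 2, f x := by
          rw [integral_comp_sub_left]
          congr 1 <;> ring
  rw [← integral_add_adjacent_intervals (hf.mono_set (Set.uIcc_subset_uIcc_left hmid))
    (hf.mono_set (Set.uIcc_subset_uIcc_right hmid)), hright]
  ring

theorem integral_min_const_id {b c : ℝ} (hb : 0 ≤ b) (hbc : b ≤ c) :
    ∫ v in 0..c, min b v = b * c - b ^ 2 / 2 := by
  have hcont : Continuous fun v : ℝ => min b v := continuous_const.min continuous_id
  have hbelow : ∫ v in 0..b, min b v = ∫ v in 0..b, v :=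
    integral_congr fun v hv => min_eq_right (Set.uIcc_of_le hb ▸ hv).2
  have habove : ∫ v in b..c, min b v = ∫ _ in b..c, b :=
    integral_congr fun v hv => min_eq_left (Set.uIcc_of_le hbc ▸ hv).1
  rw [← integral_add_adjacent_intervals (hcont.intervalIntegrable 0 b)
    (hcont.intervalIntegrable b c), hbelow, habove, integral_id, integral_const, smul_eq_mul]
  ring

end intervalIntegral

open intervalIntegral in
theorem stmt2 (l a b : ℝ) (hb : 0 < b) (hbl : b < l) (hla : l ≤ a) :
    AB2 l a b = 2 * l * b - b ^ 2 := by
  have hl : 0 < l := hb.trans hbl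
  set g : ℝ → ℝ := fun u => l * min b (l * u)
  have hg : Continuous g := continuous_const.mul (continuous_const.min (continuous_const_mul l))
  have hcap : ∀ φ, min a (l * |cos φ|) = l * |cos φ| := fun φ =>
    min_eq_right ((mul_le_of_le_one_right hl.le (abs_cos_le_one φ)).trans hla)
  calc AB2 l a b = ∫ φ in 0..π, |cos φ| * g (sin φ) := by
        simp only [AB2, hcap, g]; ring_nf
    _ = 2 * ∫ φ in 0..π / 2, |cos φ| * g (sin φ) := by
        rw [integral_eq_two_mul_of_symm, zero_add]
        · exact (continuous_abs.comp continuous_cos).mul (hg.comp continuous_sin)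
            |>.intervalIntegrable _ _
        · intro φ
          rw [zero_add, sin_pi_sub, cos_pi_sub, abs_neg]
    _ = 2 * ∫ φ in 0..π / 2, (g ∘ sin) φ * cos φ := by
        congr 1
        refine integral_congr fun φ hφ => ?_
        rw [Set.uIcc_of_le (by positivity)] at hφ
        rw [abs_of_nonneg (cos_nonneg_of_mem_Icc ⟨by linarith [hφ.1, pi_pos], hφ.2⟩)]
        simp only [Function.comp, mul_comm]
    _ = 2 * ∫ u in 0..1, g u := by
        rw [integral_comp_mul_deriv (fun φ _ => hasDerivAt_sin φ) continuous_cos.continuousOn hg,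
          sin_zero, sin_pi_div_two]
    _ = 2 * ∫ v in 0..l, min b v := by
        simp only [g, intervalIntegral.integral_const_mul, mul_integral_comp_mul_left, mul_zero,
          mul_one]
    _ = 2 * l * b - b ^ 2 := by
        rw [integral_min_const_id hb.le hbl.le]
        ring
end

section
/- For real numbers l, a, b with 0 < l ≤ b ≤ a, the intersection probability P(l,a,b) equals (2/π)·(l/a + l/b) − (1/π)·l²/(ab). -/
open Real MeasureTheory Filter

/-! Since `l ≤ b ≤ a`, the truncations `min a (l |cos φ|)` and `min b (l sin φ)` never bite, so
`A = l ∫|cos| = 2l`, `B = l ∫ sin = 2l` and `AB = l² ∫ sin |cos| = l²`. -/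

theorem integral_mul_abs_cos_zero_pi {f : ℝ → ℝ} (hf : Continuous f) :
    ∫ x in (0:ℝ)..π, f x * |cos x| =
      (∫ x in (0:ℝ)..π / 2, f x * cos x) - ∫ x in π / 2..π, f x * cos x := by
  have hpi := pi_pos
  have hint : ∀ s t : ℝ, IntervalIntegrable (fun x => f x * |cos x|) volume s t :=
    fun _ _ => (hf.mul continuous_cos.abs).intervalIntegrable _ _
  rw [← intervalIntegral.integral_add_adjacent_intervals (hint 0 (π / 2)) (hint (π / 2) π),
    sub_eq_add_neg, ← intervalIntegral.integral_neg]
  congr 1 <;> refine intervalIntegral.integral_congr fun x hx => ?_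
  · rw [Set.uIcc_of_le (by positivity)] at hx
    rw [abs_of_nonneg (cos_nonneg_of_mem_Icc ⟨by linarith [hx.1], hx.2⟩)]
  · rw [Set.uIcc_of_le (by linarith)] at hx
    rw [abs_of_nonpos (cos_nonpos_of_pi_div_two_le_of_le hx.1 (by linarith [hx.2]))]
    ring

theorem integral_abs_cos_zero_pi : ∫ x in (0:ℝ)..π, |cos x| = 2 := by
  simpa [one_add_one_eq_two] using
    integral_mul_abs_cos_zero_pi (f := fun _ => (1:ℝ)) continuous_const

theorem integral_sin_mul_abs_cos_zero_pi : ∫ x in (0:ℝ)..π, sin x * |cos x| = 1 := by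
  rw [integral_mul_abs_cos_zero_pi continuous_sin, integral_sin_mul_cos₁, integral_sin_mul_cos₁]
  norm_num

section

variable {l a b : ℝ}

theorem min_mul_abs_cos_eq (hl : 0 ≤ l) (hla : l ≤ a) (x : ℝ) :
    min a (l * |cos x|) = l * |cos x| :=
  min_eq_right (by nlinarith [abs_cos_le_one x])

theorem min_mul_sin_eq (hl : 0 ≤ l) (hlb : l ≤ b) (x : ℝ) :
    min b (l * sin x) = l * sin x :=
  min_eq_right (by nlinarith [sin_le_one x])

theorem A2_eq_of_le (hl : 0 ≤ l) (hla : l ≤ a) : A2 l a = 2 * l := by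
  simp only [A2, min_mul_abs_cos_eq hl hla, intervalIntegral.integral_const_mul,
    integral_abs_cos_zero_pi, mul_comm]

theorem B2_eq_of_le (hl : 0 ≤ l) (hlb : l ≤ b) : B2 l b = 2 * l := by
  simp only [B2, min_mul_sin_eq hl hlb, intervalIntegral.integral_const_mul, integral_sin]
  norm_num
  ring

theorem AB2_eq_of_le (hl : 0 ≤ l) (hla : l ≤ a) (hlb : l ≤ b) : AB2 l a b = l ^ 2 := by
  have h : ∀ x, l * |cos x| * (l * sin x) = l ^ 2 * (sin x * |cos x|) := fun x => by ring
  simp only [AB2, min_mul_abs_cos_eq hl hla, min_mul_sin_eq hl hlb, h,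
    intervalIntegral.integral_const_mul, integral_sin_mul_abs_cos_zero_pi, mul_one]

end

theorem stmt5 (l a b : ℝ) (hl : 0 < l) (hlb : l ≤ b) (hba : b ≤ a) :
    P2 l a b = 2 / π * (l / a + l / b) - 1 / π * (l ^ 2 / (a * b)) := by
  have hla : l ≤ a := hlb.trans hba
  rw [P2, A2_eq_of_le hl.le hla, B2_eq_of_le hl.le hlb, AB2_eq_of_le hl.le hla hlb]
  have ha : a ≠ 0 := by linarith
  have hb : b ≠ 0 := by linarith
  field_simp
end

section
/- For real numbers l, a, b with 0 < b ≤ a and √(a² + b²) < l, one has b·A(l,a) + a·B(l,b) − AB(l,a,b) = π·a·b; equivalently, the intersection probability P(l,a,b) equals 1, i.e. a needle longer than the diagonal of a grid cell intersects the grid with certainty. -/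
open Real MeasureTheory Filter

theorem stmt8 (l a b : ℝ) (hb : 0 < b) (hba : b ≤ a)
    (hLl : Real.sqrt (a ^ 2 + b ^ 2) < l) :
    b * A2 l a + a * B2 l b - AB2 l a b = π * a * b ∧ P2 l a b = 1 := by
  have hl : 0 < l := lt_of_le_of_lt (Real.sqrt_nonneg _) hLl
  have ha : 0 < a := lt_of_lt_of_le hb hba
  have hab : a ^ 2 + b ^ 2 < l ^ 2 := by
    have := (Real.sqrt_lt' hl).mp hLl
    nlinarith [this]
  have hcf : Continuous fun φ : ℝ => min a (l * |Real.cos φ|) := by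
    exact continuous_const.min (continuous_const.mul Real.continuous_cos.abs)
  have hcg : Continuous fun φ : ℝ => min b (l * Real.sin φ) := by
    exact continuous_const.min (continuous_const.mul Real.continuous_sin)
  have hf : IntervalIntegrable (fun φ : ℝ => min a (l * |Real.cos φ|)) volume 0 π :=
    hcf.intervalIntegrable 0 π
  have hg : IntervalIntegrable (fun φ : ℝ => min b (l * Real.sin φ)) volume 0 π :=
    hcg.intervalIntegrable 0 π
  have hfg : IntervalIntegrable
      (fun φ : ℝ => min a (l * |Real.cos φ|) * min b (l * Real.sin φ)) volume 0 π :=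
    (hcf.mul hcg).intervalIntegrable 0 π
  have key : ∀ φ ∈ Set.uIcc (0:ℝ) π,
      b * min a (l * |Real.cos φ|) + a * min b (l * Real.sin φ)
        - min a (l * |Real.cos φ|) * min b (l * Real.sin φ) = a * b := by
    intro φ hφ
    rw [Set.uIcc_of_le Real.pi_pos.le] at hφ
    have hs : 0 ≤ Real.sin φ := Real.sin_nonneg_of_nonneg_of_le_pi hφ.1 hφ.2
    by_cases h1 : a ≤ l * |Real.cos φ|
    · rw [min_eq_left h1]; ring
    · by_cases h2 : b ≤ l * Real.sin φ
      · rw [min_eq_left h2]; ring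
      · exfalso
        push_neg at h1 h2
        have hc : 0 ≤ l * |Real.cos φ| := by positivity
        have hs' : 0 ≤ l * Real.sin φ := by positivity
        have hid : (l * |Real.cos φ|) ^ 2 + (l * Real.sin φ) ^ 2 = l ^ 2 := by
          have := Real.sin_sq_add_cos_sq φ
          rw [mul_pow, mul_pow, sq_abs]
          nlinarith [this]
        nlinarith [hid, hab, sq_nonneg (l * |Real.cos φ|), sq_nonneg (l * Real.sin φ)]
  have main : b * A2 l a + a * B2 l b - AB2 l a b = π * a * b := by
    unfold A2 B2 AB2
    rw [← intervalIntegral.integral_const_mul, ← intervalIntegral.integral_const_mul,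
      ← intervalIntegral.integral_add (hf.const_mul b) (hg.const_mul a),
      ← intervalIntegral.integral_sub ((hf.const_mul b).add (hg.const_mul a)) hfg,
      intervalIntegral.integral_congr key, intervalIntegral.integral_const]
    simp [smul_eq_mul]; ring
  refine ⟨main, ?_⟩
  unfold P2
  rw [main]
  have : π * a * b ≠ 0 := by positivity
  exact div_self this
end

section
/- For real numbers l, σ, a, b with 0 < σ < b ≤ a and a − σ < l ≤ L̂, where L̂ := √((a−σ)² + (b−σ)²), the spherocylinder intersection probability P(l,σ,a,b) equals (1/π)·(L̂² + l²)/(ab) − (2/π)·[((b−σ)/b)·(l/a)·√(1 − (a−σ)²/l²) + ((a−σ)/a)·(l/b)·√(1 − (b−σ)²/l²)] + (2/π)·((a−σ)/a)·((b−σ)/b)·(π − arcsin((a−σ)/l) − arcsin((b−σ)/l)) + (σ/a + σ/b − σ²/(ab)). -/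
open Real MeasureTheory Filter

/-!
All three integrands are invariant under `φ ↦ π - φ`, so each integral over `[0, π]` is twice
the integral over `[0, π/2]`, where `|cos φ| = cos φ`; the substitution `φ ↦ π/2 - φ` then
identifies `A2` with `B2`. On `[0, π/2]` the minimum `min c (l sin φ)` switches branch once, at
`arcsin (c / l)`, and `min c (l cos φ)` at `arccos (c / l)`. For the product of the two minima,
`l² ≤ a² + b²` is exactly what puts `arccos (a / l)` before `arcsin (b / l)`, so `[0, π/2]` splits
into three pieces on which the integrand is `a l sin φ`, `l² sin φ cos φ` and `b l cos φ`.
-/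

open Set intervalIntegral

lemma integral_eq_add_of_eqOn {f g h : ℝ → ℝ} {x y z : ℝ} (hxy : x ≤ y) (hyz : y ≤ z)
    (hf : Continuous f) (hg : EqOn f g (Icc x y)) (hh : EqOn f h (Icc y z)) :
    ∫ t in x..z, f t = (∫ t in x..y, g t) + ∫ t in y..z, h t := by
  rw [← integral_add_adjacent_intervals (hf.intervalIntegrable x y) (hf.intervalIntegrable y z),
    integral_congr (show EqOn f g (uIcc x y) by rwa [uIcc_of_le hxy]),
    integral_congr (show EqOn f h (uIcc y z) by rwa [uIcc_of_le hyz])]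

lemma integral_zero_pi_eq_two_mul_of_symm {f : ℝ → ℝ} (hf : Continuous f)
    (hsymm : ∀ φ, f (π - φ) = f φ) :
    ∫ φ in (0:ℝ)..π, f φ = 2 * ∫ φ in (0:ℝ)..(π / 2), f φ := by
  have hsecond : ∫ φ in (π / 2)..π, f φ = ∫ φ in (0:ℝ)..(π / 2), f φ := by
    simpa [hsymm, show π - π / 2 = π / 2 by ring] using
      integral_comp_sub_left f π (a := π / 2) (b := π)
  rw [← integral_add_adjacent_intervals (hf.intervalIntegrable 0 (π / 2))
    (hf.intervalIntegrable _ π), hsecond]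
  ring

lemma B2_eq_two_mul_integral (l c : ℝ) :
    B2 l c = 2 * ∫ φ in (0:ℝ)..(π / 2), min c (l * sin φ) :=
  integral_zero_pi_eq_two_mul_of_symm (by fun_prop) (fun φ => by rw [sin_pi_sub])

lemma A2_eq_B2 (l c : ℝ) : A2 l c = B2 l c := by
  have hcos : EqOn (fun φ => min c (l * |cos φ|)) (fun φ => min c (l * sin (π / 2 - φ)))
      (uIcc 0 (π / 2)) := fun φ hφ => by
    rw [uIcc_of_le (by positivity)] at hφ
    simp only [sin_pi_div_two_sub,
      abs_of_nonneg (cos_nonneg_of_mem_Icc ⟨by linarith [hφ.1, pi_pos], hφ.2⟩)]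
  rw [B2_eq_two_mul_integral, A2, integral_zero_pi_eq_two_mul_of_symm (by fun_prop)
    (fun φ => by rw [cos_pi_sub, abs_neg]), integral_congr hcos,
    integral_comp_sub_left (fun φ => min c (l * sin φ))]
  simp

lemma AB2_eq_two_mul_integral (l a b : ℝ) :
    AB2 l a b = 2 * ∫ φ in (0:ℝ)..(π / 2), min a (l * cos φ) * min b (l * sin φ) := by
  rw [AB2, integral_zero_pi_eq_two_mul_of_symm (by fun_prop)
    (fun φ => by rw [cos_pi_sub, abs_neg, sin_pi_sub])]
  congr 1
  refine integral_congr fun φ hφ => ?_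
  rw [uIcc_of_le (by positivity)] at hφ
  simp only [abs_of_nonneg (cos_nonneg_of_mem_Icc ⟨by linarith [hφ.1, pi_pos], hφ.2⟩)]

section Pointwise

variable {c l φ : ℝ}

lemma div_mem_Icc_neg_one_one (hl : 0 < l) (hc : |c| ≤ l) : c / l ∈ Icc (-1 : ℝ) 1 := by
  rw [mem_Icc, le_div_iff₀ hl, div_le_iff₀ hl]
  constructor <;> linarith [abs_le.1 hc]

lemma min_mul_sin_of_le_arcsin (hl : 0 < l) (hc : |c| ≤ l)
    (hφ : φ ∈ Icc (-(π / 2)) (arcsin (c / l))) : min c (l * sin φ) = l * sin φ := by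
  have hsin : sin φ ≤ c / l := (le_arcsin_iff_sin_le ⟨hφ.1, hφ.2.trans (arcsin_le_pi_div_two _)⟩
    (div_mem_Icc_neg_one_one hl hc)).1 hφ.2
  exact min_eq_right (by rwa [le_div_iff₀ hl, mul_comm] at hsin)

lemma min_mul_sin_of_arcsin_le (hl : 0 < l) (hc : |c| ≤ l)
    (hφ : φ ∈ Icc (arcsin (c / l)) (π / 2)) : min c (l * sin φ) = c := by
  have hsin : c / l ≤ sin φ := (arcsin_le_iff_le_sin (div_mem_Icc_neg_one_one hl hc)
    ⟨(neg_pi_div_two_le_arcsin _).trans hφ.1, hφ.2⟩).1 hφ.1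
  exact min_eq_left (by rwa [div_le_iff₀ hl, mul_comm] at hsin)

lemma min_mul_cos_of_le_arccos (hl : 0 < l) (hc : |c| ≤ l)
    (hφ : φ ∈ Icc 0 (arccos (c / l))) : min c (l * cos φ) = c := by
  rw [arccos_eq_pi_div_two_sub_arcsin] at hφ
  rw [← sin_pi_div_two_sub]
  exact min_mul_sin_of_arcsin_le hl hc ⟨by linarith [hφ.2], by linarith [hφ.1]⟩

lemma min_mul_cos_of_arccos_le (hl : 0 < l) (hc : |c| ≤ l)
    (hφ : φ ∈ Icc (arccos (c / l)) π) : min c (l * cos φ) = l * cos φ := by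
  rw [arccos_eq_pi_div_two_sub_arcsin] at hφ
  rw [← sin_pi_div_two_sub]
  exact min_mul_sin_of_le_arcsin hl hc ⟨by linarith [hφ.2], by linarith [hφ.1]⟩

end Pointwise

lemma sqrt_one_sub_sq_div_sq {l : ℝ} (hl : 0 < l) (c : ℝ) :
    √(1 - c ^ 2 / l ^ 2) = √(l ^ 2 - c ^ 2) / l := by
  rw [show 1 - c ^ 2 / l ^ 2 = (l ^ 2 - c ^ 2) / l ^ 2 by field_simp, sqrt_div' _ (sq_nonneg l),
    sqrt_sq hl.le]

lemma integral_min_mul_sin {c l : ℝ} (hc : 0 ≤ c) (hcl : c ≤ l) (hl : 0 < l) :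
    ∫ φ in (0:ℝ)..(π / 2), min c (l * sin φ) = l - √(l ^ 2 - c ^ 2) + c * arccos (c / l) := by
  have habs : |c| ≤ l := abs_le.2 ⟨by linarith, hcl⟩
  rw [integral_eq_add_of_eqOn (arcsin_nonneg.2 (div_nonneg hc hl.le)) (arcsin_le_pi_div_two _)
      (by fun_prop) (g := fun φ => l * sin φ) (h := fun _ => c)
      (fun φ hφ => min_mul_sin_of_le_arcsin hl habs ⟨by linarith [hφ.1, pi_pos], hφ.2⟩)
      (fun φ hφ => min_mul_sin_of_arcsin_le hl habs hφ),
    intervalIntegral.integral_const_mul, integral_sin, intervalIntegral.integral_const,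
    cos_arcsin, div_pow, sqrt_one_sub_sq_div_sq hl, arccos_eq_pi_div_two_sub_arcsin, cos_zero, smul_eq_mul]
  field_simp

lemma arccos_div_le_arcsin_div {a b l : ℝ} (ha : 0 ≤ a) (hb : 0 ≤ b) (hl : 0 < l)
    (hl2 : l ^ 2 ≤ a ^ 2 + b ^ 2) : arccos (a / l) ≤ arcsin (b / l) := by
  have hcos : cos (arcsin (b / l)) ≤ a / l := by
    rw [cos_arcsin, sqrt_le_left (div_nonneg ha hl.le), div_pow, div_pow, sub_le_iff_le_add,
      ← add_div, le_div_iff₀ (by positivity)]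
    linarith
  calc arccos (a / l) ≤ arccos (cos (arcsin (b / l))) := antitone_arccos hcos
    _ = arcsin (b / l) := arccos_cos (arcsin_nonneg.2 (div_nonneg hb hl.le))
      (by linarith [arcsin_le_pi_div_two (b / l), pi_pos])

lemma integral_min_mul_cos_mul_min_mul_sin {a b l : ℝ} (ha : 0 ≤ a) (hb : 0 ≤ b) (hal : a ≤ l)
    (hbl : b ≤ l) (hl : 0 < l) (hl2 : l ^ 2 ≤ a ^ 2 + b ^ 2) :
    ∫ φ in (0:ℝ)..(π / 2), min a (l * cos φ) * min b (l * sin φ)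
      = l * (a + b) - (a ^ 2 + b ^ 2 + l ^ 2) / 2 := by
  have habs_a : |a| ≤ l := abs_le.2 ⟨by linarith, hal⟩
  have habs_b : |b| ≤ l := abs_le.2 ⟨by linarith, hbl⟩
  set α := arccos (a / l) with hα
  set β := arcsin (b / l) with hβ
  have hxa := div_mem_Icc_neg_one_one hl habs_a
  have hxb := div_mem_Icc_neg_one_one hl habs_b
  have hxa_sq : (a / l) ^ 2 ≤ 1 := by
    rw [div_pow, div_le_one (by positivity)]
    nlinarith
  have hα0 : 0 ≤ α := arccos_nonneg _
  have hαβ : α ≤ β := arccos_div_le_arcsin_div ha hb hl hl2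
  have hβ1 : β ≤ π / 2 := arcsin_le_pi_div_two _
  rw [integral_eq_add_of_eqOn hα0 (hαβ.trans hβ1) (by fun_prop)
      (g := fun φ => a * l * sin φ) (fun φ hφ => by
        dsimp only
        rw [min_mul_cos_of_le_arccos hl habs_a hφ,
          min_mul_sin_of_le_arcsin hl habs_b ⟨by linarith [hφ.1, pi_pos], hφ.2.trans hαβ⟩]
        ring) (fun _ _ => rfl),
    integral_eq_add_of_eqOn hαβ hβ1 (by fun_prop)
      (g := fun φ => l ^ 2 * (sin φ * cos φ)) (h := fun φ => b * l * cos φ)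
      (fun φ hφ => by
        dsimp only
        rw [min_mul_cos_of_arccos_le hl habs_a ⟨hφ.1, by linarith [hφ.2, pi_pos]⟩,
          min_mul_sin_of_le_arcsin hl habs_b ⟨by linarith [hφ.1, pi_pos], hφ.2⟩]
        ring)
      (fun φ hφ => by
        dsimp only
        rw [min_mul_cos_of_arccos_le hl habs_a ⟨by linarith [hφ.1], by linarith [hφ.2, pi_pos]⟩,
          min_mul_sin_of_arcsin_le hl habs_b hφ]
        ring),
    intervalIntegral.integral_const_mul, intervalIntegral.integral_const_mul,
    intervalIntegral.integral_const_mul, integral_sin, integral_cos, integral_sin_mul_cos₁,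
    cos_zero, sin_pi_div_two, sin_arccos, sq_sqrt (sub_nonneg.2 hxa_sq), hα, hβ,
    cos_arccos hxa.1 hxa.2, sin_arcsin hxb.1 hxb.2]
  field_simp
  ring

theorem stmt11 (l σ a b : ℝ) (hσ : 0 < σ) (hσb : σ < b) (hba : b ≤ a)
    (hal : a - σ < l) (hlL : l ≤ Real.sqrt ((a - σ) ^ 2 + (b - σ) ^ 2)) :
    P2sc l σ a b
      = 1 / π * ((Real.sqrt ((a - σ) ^ 2 + (b - σ) ^ 2) ^ 2 + l ^ 2) / (a * b))
      - 2 / π * (((b - σ) / b) * (l / a) * Real.sqrt (1 - (a - σ) ^ 2 / l ^ 2)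
        + ((a - σ) / a) * (l / b) * Real.sqrt (1 - (b - σ) ^ 2 / l ^ 2))
      + 2 / π * ((a - σ) / a) * ((b - σ) / b)
        * (π - Real.arcsin ((a - σ) / l) - Real.arcsin ((b - σ) / l))
      + (σ / a + σ / b - σ ^ 2 / (a * b)) := by
  have ha : 0 < a := by linarith
  have hb : 0 < b := by linarith
  have hbl : b - σ ≤ l := by linarith
  have hl : 0 < l := by linarith
  have hl2 : l ^ 2 ≤ (a - σ) ^ 2 + (b - σ) ^ 2 := (le_sqrt hl.le (by positivity)).1 hlL
  rw [P2sc, A2_eq_B2, B2_eq_two_mul_integral, B2_eq_two_mul_integral, AB2_eq_two_mul_integral,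
    integral_min_mul_sin (by linarith) hal.le hl, integral_min_mul_sin (by linarith) hbl hl,
    integral_min_mul_cos_mul_min_mul_sin (by linarith) (by linarith) hal.le hbl hl hl2,
    sq_sqrt (by positivity), sqrt_one_sub_sq_div_sq hl, sqrt_one_sub_sq_div_sq hl,
    arccos_eq_pi_div_two_sub_arcsin, arccos_eq_pi_div_two_sub_arcsin]
  field_simp
  ring
end

section
/- For real numbers l, σ, a, b with 0 < σ < b ≤ a and √((a−σ)² + (b−σ)²) < l, one has (b−σ)·A(l,a−σ) + (a−σ)·B(l,b−σ) − AB(l,a−σ,b−σ) + (σa + σb − σ²)·π = π·a·b; equivalently, the spherocylinder intersection probability P(l,σ,a,b) equals 1. -/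
open Real MeasureTheory Filter

/-!
When the needle is longer than the diagonal `√(a² + b²)` of a cell, in every direction `φ` its
projection onto one of the two axes, `l·|cos φ|` or `l·sin φ`, exceeds the corresponding side of
the cell. One of the two minima in the integrand of `AB` is then constant, so that
`min(a, x)·min(b, y) = b·min(a, x) + a·min(b, y) − a·b` pointwise and
`AB = b·A + a·B − π·a·b`. For the spherocylinder, with `a − σ` and `b − σ` in place of `a` and `b`,
this makes the numerator of `P2sc` collapse to `π·a·b`.
-/

lemma le_or_le_of_sq_add_sq_lt {a b x y : ℝ} (hx : 0 ≤ x) (hy : 0 ≤ y)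
    (h : a ^ 2 + b ^ 2 < x ^ 2 + y ^ 2) : a ≤ x ∨ b ≤ y := by
  by_contra! hlt
  nlinarith [hlt.1, hlt.2]

lemma min_mul_min_of_le_or_le {a b x y : ℝ} (h : a ≤ x ∨ b ≤ y) :
    min a x * min b y = b * min a x + a * min b y - a * b := by
  rcases h with h | h <;> rw [min_eq_left h] <;> ring

lemma le_abs_cos_or_le_sin {l a b φ : ℝ} (hl : √(a ^ 2 + b ^ 2) < l) (hφ : φ ∈ Set.Icc 0 π) :
    a ≤ l * |cos φ| ∨ b ≤ l * sin φ := by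
  have hl0 : 0 < l := (sqrt_nonneg _).trans_lt hl
  have hsin : 0 ≤ sin φ := sin_nonneg_of_nonneg_of_le_pi hφ.1 hφ.2
  refine le_or_le_of_sq_add_sq_lt (by positivity) (by positivity) ?_
  have hproj : (l * |cos φ|) ^ 2 + (l * sin φ) ^ 2 = l ^ 2 := by
    rw [mul_pow, mul_pow, sq_abs, ← mul_add, cos_sq_add_sin_sq, mul_one]
  rw [hproj]
  exact (sqrt_lt' hl0).1 hl

lemma AB2_eq_of_sqrt_lt {l a b : ℝ} (hl : √(a ^ 2 + b ^ 2) < l) :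
    AB2 l a b = b * A2 l a + a * B2 l b - π * (a * b) := by
  have hA : Continuous fun φ => b * min a (l * |cos φ|) := by fun_prop
  have hB : Continuous fun φ => a * min b (l * sin φ) := by fun_prop
  have hpointwise : AB2 l a b =
      ∫ φ in (0:ℝ)..π, (b * min a (l * |cos φ|) + a * min b (l * sin φ) - a * b) := by
    refine intervalIntegral.integral_congr fun φ hφ => ?_
    rw [Set.uIcc_of_le pi_pos.le] at hφ
    exact min_mul_min_of_le_or_le (le_abs_cos_or_le_sin hl hφ)
  have hAi := hA.intervalIntegrable (μ := volume) 0 π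
  have hBi := hB.intervalIntegrable (μ := volume) 0 π
  rw [hpointwise, intervalIntegral.integral_sub (hAi.add hBi) intervalIntegrable_const,
    intervalIntegral.integral_add hAi hBi, intervalIntegral.integral_const_mul,
    intervalIntegral.integral_const_mul, intervalIntegral.integral_const, A2, B2,
    sub_zero, smul_eq_mul]

theorem stmt12 (l σ a b : ℝ) (hσ : 0 < σ) (hσb : σ < b) (hba : b ≤ a)
    (hLl : Real.sqrt ((a - σ) ^ 2 + (b - σ) ^ 2) < l) :
    (b - σ) * A2 l (a - σ) + (a - σ) * B2 l (b - σ) - AB2 l (a - σ) (b - σ)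
        + (σ * a + σ * b - σ ^ 2) * π = π * a * b
      ∧ P2sc l σ a b = 1 := by
  have hnum : (b - σ) * A2 l (a - σ) + (a - σ) * B2 l (b - σ) - AB2 l (a - σ) (b - σ)
      + (σ * a + σ * b - σ ^ 2) * π = π * a * b := by
    rw [AB2_eq_of_sqrt_lt hLl]
    ring
  have hb : 0 < b := hσ.trans hσb
  have hden : π * a * b ≠ 0 := by
    have := hb.trans_le hba
    positivity
  exact ⟨hnum, by rw [P2sc, hnum, div_self hden]⟩
end

section
/- For real numbers l and a with 0 < a < l, the double integral ∫_{0}^{π/2} ∫_{0}^{π} min(a, l·sin ψ·|cos φ|) dφ dψ equals 2l − 2l·F(arcsin(a/l), π/2, a/l) + 2a·G(arcsin(a/l), π/2, a/l). -/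
open Real MeasureTheory Filter

open Set

/-! The inner integral only sees the projected length `c = l sin ψ`. By the symmetry
`φ ↦ π - φ` it is twice the integral over `[0, π/2]`, where `min a (c cos φ)` is `c cos φ`
throughout if `c ≤ a`, while if `c ≥ a` it is `a` up to `φ = arccos (a / c)` and `c cos φ`
beyond; this gives `2c`, resp. `2c + 2a arccos (a / c) - 2√(c² - a²)`. The two regimes meet
at `ψ = arcsin (a / l)`, and integrating the closed forms over `ψ` produces `F` and `G`. -/

theorem intervalIntegral.integral_eq_add_of_eqOn {E : Type*} [NormedAddCommGroup E]
    [NormedSpace ℝ E] {μ : Measure ℝ} {f g₁ g₂ : ℝ → E} {a b c : ℝ}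
    (h₁ : EqOn f g₁ (uIcc a b)) (h₂ : EqOn f g₂ (uIcc b c))
    (hg₁ : IntervalIntegrable g₁ μ a b) (hg₂ : IntervalIntegrable g₂ μ b c) :
    ∫ x in a..c, f x ∂μ = (∫ x in a..b, g₁ x ∂μ) + ∫ x in b..c, g₂ x ∂μ := by
  rw [← intervalIntegral.integral_congr h₁, ← intervalIntegral.integral_congr h₂,
    intervalIntegral.integral_add_adjacent_intervals
      ((intervalIntegrable_congr (h₁.mono uIoc_subset_uIcc)).mpr hg₁)
      ((intervalIntegrable_congr (h₂.mono uIoc_subset_uIcc)).mpr hg₂)]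

theorem integral_zero_pi_eq_two_mul_of_comp_pi_sub {f : ℝ → ℝ} (hf : Continuous f)
    (hsymm : ∀ x, f (π - x) = f x) :
    ∫ x in (0 : ℝ)..π, f x = 2 * ∫ x in (0 : ℝ)..(π / 2), f x := by
  have hreflect := intervalIntegral.integral_comp_sub_left (a := 0) (b := π / 2) f π
  simp only [hsymm, sub_zero, show π - π / 2 = π / 2 by ring] at hreflect
  rw [← intervalIntegral.integral_add_adjacent_intervals
    (hf.intervalIntegrable 0 (π / 2)) (hf.intervalIntegrable (π / 2) π), ← hreflect]
  ring

theorem integral_min_mul_abs_cos_of_le {a c : ℝ} (hc : 0 ≤ c) (hca : c ≤ a) :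
    ∫ φ in (0 : ℝ)..π, min a (c * |cos φ|) = 2 * c := by
  rw [integral_zero_pi_eq_two_mul_of_comp_pi_sub (by fun_prop)
    (fun φ ↦ by rw [cos_pi_sub, abs_neg])]
  have hmin : EqOn (fun φ ↦ min a (c * |cos φ|)) (fun φ ↦ c * cos φ) (uIcc 0 (π / 2)) := by
    intro φ hφ
    rw [uIcc_of_le (by positivity)] at hφ
    have hcos : 0 ≤ cos φ := cos_nonneg_of_mem_Icc ⟨by linarith [hφ.1, pi_pos], hφ.2⟩
    simp only [abs_of_nonneg hcos]
    exact min_eq_right (by nlinarith [cos_le_one φ])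
  rw [intervalIntegral.integral_congr hmin, intervalIntegral.integral_const_mul, integral_cos,
    sin_pi_div_two, sin_zero]
  ring

theorem integral_min_mul_abs_cos_of_ge {a c : ℝ} (ha : 0 < a) (hac : a ≤ c) :
    ∫ φ in (0 : ℝ)..π, min a (c * |cos φ|)
      = 2 * c + 2 * a * arccos (a / c) - 2 * √(c ^ 2 - a ^ 2) := by
  have hc : 0 < c := ha.trans_le hac
  have hac' : a / c ≤ 1 := div_le_one_of_le₀ hac hc.le
  set φ₀ := arccos (a / c)
  have hφ₀ : φ₀ ≤ π / 2 := arccos_le_pi_div_two.mpr (by positivity)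
  have hcos_φ₀ : c * cos φ₀ = a := by
    rw [cos_arccos (by linarith [div_pos ha hc]) hac']
    field_simp
  have hmin_left : EqOn (fun φ ↦ min a (c * |cos φ|)) (fun _ ↦ a) (uIcc 0 φ₀) := by
    intro φ hφ
    rw [uIcc_of_le (arccos_nonneg _)] at hφ
    have hle : cos φ₀ ≤ cos φ :=
      cos_le_cos_of_nonneg_of_le_pi hφ.1 (by linarith [pi_pos]) hφ.2
    refine min_eq_left ?_
    nlinarith [le_abs_self (cos φ)]
  have hmin_right :
      EqOn (fun φ ↦ min a (c * |cos φ|)) (fun φ ↦ c * cos φ) (uIcc φ₀ (π / 2)) := by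
    intro φ hφ
    rw [uIcc_of_le hφ₀] at hφ
    have hle : cos φ ≤ cos φ₀ :=
      cos_le_cos_of_nonneg_of_le_pi (arccos_nonneg _) (by linarith [hφ.2, pi_pos]) hφ.1
    have hnonneg : 0 ≤ cos φ :=
      cos_nonneg_of_mem_Icc ⟨by linarith [arccos_nonneg (a / c), hφ.1, pi_pos], hφ.2⟩
    simp only [abs_of_nonneg hnonneg]
    exact min_eq_right (by nlinarith)
  have hsqrt : c * √(1 - (a / c) ^ 2) = √(c ^ 2 - a ^ 2) := by
    rw [show c ^ 2 - a ^ 2 = c ^ 2 * (1 - (a / c) ^ 2) by field_simp, sqrt_mul (sq_nonneg c),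
      sqrt_sq hc.le]
  rw [integral_zero_pi_eq_two_mul_of_comp_pi_sub (by fun_prop)
      (fun φ ↦ by rw [cos_pi_sub, abs_neg]),
    intervalIntegral.integral_eq_add_of_eqOn hmin_left hmin_right intervalIntegrable_const
      (by apply Continuous.intervalIntegrable; fun_prop),
    intervalIntegral.integral_const, intervalIntegral.integral_const_mul, integral_cos,
    sin_pi_div_two, sin_arccos, smul_eq_mul]
  linear_combination (-2) * hsqrt

theorem integral_min_mul_mul_abs_cos_of_ge {a l s : ℝ} (ha : 0 < a) (hl : 0 < l)
    (h : a ≤ l * s) :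
    ∫ φ in (0 : ℝ)..π, min a (l * s * |cos φ|)
      = 2 * l * s + 2 * a * (π / 2 - arcsin (a / l / s)) - 2 * l * √(s ^ 2 - (a / l) ^ 2) := by
  rw [integral_min_mul_abs_cos_of_ge ha h, arccos_eq_pi_div_two_sub_arcsin, div_div,
    show (l * s) ^ 2 - a ^ 2 = l ^ 2 * (s ^ 2 - (a / l) ^ 2) by field_simp,
    sqrt_mul (sq_nonneg l), sqrt_sq hl.le]
  ring

theorem integral_min_mul_sin_mul_abs_cos_of_mem_uIcc_zero_arcsin {a l ψ : ℝ} (ha : 0 ≤ a)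
    (hl : 0 < l) (hψ : ψ ∈ uIcc 0 (arcsin (a / l))) :
    ∫ φ in (0 : ℝ)..π, min a (l * sin ψ * |cos φ|) = 2 * l * sin ψ := by
  have hα : arcsin (a / l) ≤ π / 2 := arcsin_le_pi_div_two _
  rw [uIcc_of_le (arcsin_nonneg.mpr (by positivity))] at hψ
  have hsin0 : 0 ≤ sin ψ := sin_nonneg_of_nonneg_of_le_pi hψ.1 (by linarith [hψ.2, pi_pos])
  have hsin : sin ψ ≤ a / l :=
    (le_arcsin_iff_sin_le' ⟨by linarith [hψ.1, pi_pos], hψ.2.trans hα⟩).mp hψ.2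
  rw [integral_min_mul_abs_cos_of_le (mul_nonneg hl.le hsin0) ((le_div_iff₀' hl).mp hsin),
    mul_assoc]

theorem integral_min_mul_sin_mul_abs_cos_of_mem_uIcc_arcsin_pi_div_two {a l ψ : ℝ} (ha : 0 < a)
    (hal : a ≤ l) (hψ : ψ ∈ uIcc (arcsin (a / l)) (π / 2)) :
    ∫ φ in (0 : ℝ)..π, min a (l * sin ψ * |cos φ|)
      = 2 * l * sin ψ + 2 * a * (π / 2 - arcsin (a / l / sin ψ))
        - 2 * l * √(sin ψ ^ 2 - (a / l) ^ 2) := by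
  have hl : 0 < l := ha.trans_le hal
  have hα : 0 ≤ arcsin (a / l) := arcsin_nonneg.mpr (by positivity)
  rw [uIcc_of_le (arcsin_le_pi_div_two _)] at hψ
  have hsin : a / l ≤ sin ψ := (arcsin_le_iff_le_sin ⟨by linarith [div_pos ha hl],
    (div_le_one hl).mpr hal⟩ ⟨by linarith [hψ.1, pi_pos], hψ.2⟩).mp hψ.1
  exact integral_min_mul_mul_abs_cos_of_ge ha hl ((div_le_iff₀' hl).mp hsin)

theorem intervalIntegrable_pi_div_two_sub_arcsin_div_sin {t : ℝ} (ht : 0 < t) :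
    IntervalIntegrable (fun ψ ↦ π / 2 - arcsin (t / sin ψ)) volume (arcsin t) (π / 2) := by
  have hα : 0 < arcsin t := arcsin_pos.mpr ht
  refine ContinuousOn.intervalIntegrable (continuousOn_const.sub
    (continuous_arcsin.comp_continuousOn (continuousOn_const.div continuous_sin.continuousOn ?_)))
  intro ψ hψ
  rw [uIcc_of_le (arcsin_le_pi_div_two t)] at hψ
  exact (sin_pos_of_pos_of_lt_pi (hα.trans_le hψ.1) (by linarith [hψ.2, pi_pos])).ne'

theorem stmt13 (l a : ℝ) (ha : 0 < a) (hal : a < l) :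
    A3 l a = 2 * l - 2 * l * Faux (Real.arcsin (a / l)) (π / 2) (a / l)
      + 2 * a * Gaux (Real.arcsin (a / l)) (π / 2) (a / l) := by
  have hsin (x y : ℝ) : IntervalIntegrable (fun ψ ↦ 2 * l * sin ψ) volume x y := by
    apply Continuous.intervalIntegrable; fun_prop
  have hG :=
    (intervalIntegrable_pi_div_two_sub_arcsin_div_sin (div_pos ha (ha.trans hal))).const_mul (2 * a)
  have hF : IntervalIntegrable (fun ψ ↦ 2 * l * √(sin ψ ^ 2 - (a / l) ^ 2)) volume
      (arcsin (a / l)) (π / 2) := by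
    apply Continuous.intervalIntegrable; fun_prop
  rw [A3, Faux, Gaux, intervalIntegral.integral_eq_add_of_eqOn
      (fun ψ ↦ integral_min_mul_sin_mul_abs_cos_of_mem_uIcc_zero_arcsin ha.le (ha.trans hal))
      (fun ψ ↦ integral_min_mul_sin_mul_abs_cos_of_mem_uIcc_arcsin_pi_div_two ha hal.le)
      (hsin _ _) (((hsin _ _).add hG).sub hF),
    intervalIntegral.integral_sub ((hsin _ _).add hG) hF,
    intervalIntegral.integral_add (hsin _ _) hG]
  simp only [intervalIntegral.integral_const_mul, integral_sin, cos_pi_div_two, cos_zero]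
  ring
end

section
/- For real numbers l and b with 0 < b < l, the double integral ∫_{0}^{π/2} ∫_{0}^{π} min(b, l·sin ψ·sin φ) dφ dψ equals 2l − 2l·F(arcsin(b/l), π/2, b/l) + 2b·G(arcsin(b/l), π/2, b/l). -/
open Real MeasureTheory Filter

/-! The integrand `φ ↦ min b (c sin φ)` is symmetric about `π/2`, and on `[0, π/2]` it equals
`c sin φ` up to `arcsin (b/c)` and `b` afterwards. This gives the inner integral
`2c − 2√(c² − b²) + b(π − 2 arcsin (b/c))` for every `c > 0`, with no case split on `c ≤ b`:
there `Real.sqrt` and `arcsin` saturate to `0` and `π/2`. With `c = l sin ψ` and `t = b/l`, the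
outer integrand is `2l sin ψ − 2l√(sin²ψ − t²) + 2b(π/2 − arcsin (t / sin ψ))`, whose last two
terms vanish for `ψ < arcsin t`. -/

open intervalIntegral Set

theorem integral_comp_sin_eq_two_mul_integral {f : ℝ → ℝ} (hf : Continuous f) :
    ∫ x in (0 : ℝ)..π, f (sin x) = 2 * ∫ x in (0 : ℝ)..π / 2, f (sin x) := by
  have hi (a b : ℝ) : IntervalIntegrable (fun x => f (sin x)) volume a b :=
    (hf.comp continuous_sin).intervalIntegrable a b
  have hsymm : ∫ x in π / 2..π, f (sin x) = ∫ x in (0 : ℝ)..π / 2, f (sin x) := by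
    have := integral_comp_sub_left (fun x => f (sin x)) (a := 0) (b := π / 2) π
    simp only [sin_pi_sub, sub_zero] at this
    rw [this, sub_half]
  rw [← integral_add_adjacent_intervals (hi 0 (π / 2)) (hi (π / 2) π), hsymm, two_mul]

theorem integral_min_const_mul_sin_zero_pi_div_two {b c : ℝ} (hb : 0 ≤ b) (hc : 0 < c) :
    ∫ x in (0 : ℝ)..π / 2, min b (c * sin x)
      = c * (1 - cos (arcsin (b / c))) + b * (π / 2 - arcsin (b / c)) := by
  set x₀ := arcsin (b / c)
  have hx₀_le : x₀ ≤ π / 2 := arcsin_le_pi_div_two _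
  have hx₀_nonneg : 0 ≤ x₀ := arcsin_nonneg.2 (div_nonneg hb hc.le)
  have hi (u v : ℝ) : IntervalIntegrable (fun x => min b (c * sin x)) volume u v :=
    (continuous_const.min (continuous_const.mul continuous_sin)).intervalIntegrable u v
  have below : EqOn (fun x => min b (c * sin x)) (fun x => c * sin x) (uIoo 0 x₀) := by
    intro x hx
    rw [uIoo_of_le hx₀_nonneg] at hx
    have : sin x ≤ b / c :=
      (le_arcsin_iff_sin_le' ⟨by linarith [pi_pos, hx.1], by linarith [hx.2]⟩).1 hx.2.le
    exact min_eq_right ((le_div_iff₀' hc).1 this)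
  have above : EqOn (fun x => min b (c * sin x)) (fun _ => b) (uIoo x₀ (π / 2)) := by
    intro x hx
    rw [uIoo_of_le hx₀_le] at hx
    have : b / c < sin x := (arcsin_lt_iff_lt_sin' ⟨by linarith [pi_pos, hx.1], hx.2.le⟩).1 hx.1
    exact min_eq_left ((div_lt_iff₀' hc).1 this).le
  rw [← integral_add_adjacent_intervals (hi 0 x₀) (hi x₀ (π / 2)), integral_congr_uIoo below,
    integral_congr_uIoo above, intervalIntegral.integral_const_mul, integral_sin,
    intervalIntegral.integral_const, cos_zero, smul_eq_mul]
  ring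

theorem integral_min_const_mul_sin {b c : ℝ} (hb : 0 ≤ b) (hc : 0 < c) :
    ∫ x in (0 : ℝ)..π, min b (c * sin x)
      = 2 * c - 2 * √(c ^ 2 - b ^ 2) + b * (π - 2 * arcsin (b / c)) := by
  have hsqrt : c * cos (arcsin (b / c)) = √(c ^ 2 - b ^ 2) := by
    rw [cos_arcsin, show c ^ 2 - b ^ 2 = c ^ 2 * (1 - (b / c) ^ 2) by field_simp,
      sqrt_mul (sq_nonneg c), sqrt_sq hc.le]
  rw [integral_comp_sin_eq_two_mul_integral (f := fun s => min b (c * s)) (by fun_prop),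
    integral_min_const_mul_sin_zero_pi_div_two hb hc, ← hsqrt]
  ring

theorem integral_min_mul_mul_sin {b l s : ℝ} (hb : 0 ≤ b) (hl : 0 < l) (hs : 0 < s) :
    ∫ x in (0 : ℝ)..π, min b (l * s * sin x)
      = 2 * l * s - 2 * l * √(s ^ 2 - (b / l) ^ 2) + 2 * b * (π / 2 - arcsin (b / l / s)) := by
  have hsqrt : √((l * s) ^ 2 - b ^ 2) = l * √(s ^ 2 - (b / l) ^ 2) := by
    rw [show (l * s) ^ 2 - b ^ 2 = l ^ 2 * (s ^ 2 - (b / l) ^ 2) by field_simp,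
      sqrt_mul (sq_nonneg l), sqrt_sq hl.le]
  rw [integral_min_const_mul_sin hb (mul_pos hl hs), hsqrt, div_div]
  ring

theorem sin_mem_Ioc_of_mem_Ioo_arcsin {t x : ℝ} (hx : x ∈ Ioo 0 (arcsin t)) : sin x ∈ Ioc 0 t :=
  have hx' : x ≤ π / 2 := hx.2.le.trans (arcsin_le_pi_div_two t)
  ⟨sin_pos_of_pos_of_lt_pi hx.1 (by linarith [pi_pos]),
    (le_arcsin_iff_sin_le' ⟨by linarith [pi_pos, hx.1], hx'⟩).1 hx.2.le⟩

theorem intervalIntegrable_Faux_integrand (t a b : ℝ) :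
    IntervalIntegrable (fun x => √(sin x ^ 2 - t ^ 2)) volume a b :=
  (by fun_prop : Continuous fun x => √(sin x ^ 2 - t ^ 2)).intervalIntegrable a b

theorem intervalIntegrable_Gaux_integrand (t a b : ℝ) :
    IntervalIntegrable (fun x => π / 2 - arcsin (t / sin x)) volume a b := by
  refine intervalIntegrable_iff.2 <| Measure.integrableOn_of_bounded (M := π)
    measure_Ioc_lt_top.ne
    ((continuous_arcsin.measurable.comp (measurable_const.div continuous_sin.measurable)).const_sub
      _).aestronglyMeasurable (ae_of_all _ fun x => abs_le.2 ⟨?_, ?_⟩)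
  · linarith [arcsin_le_pi_div_two (t / sin x), pi_pos]
  · linarith [neg_pi_div_two_le_arcsin (t / sin x)]

theorem Faux_add_adjacent (a b c t : ℝ) : Faux a b t + Faux b c t = Faux a c t :=
  integral_add_adjacent_intervals (intervalIntegrable_Faux_integrand t a b)
    (intervalIntegrable_Faux_integrand t b c)

theorem Gaux_add_adjacent (a b c t : ℝ) : Gaux a b t + Gaux b c t = Gaux a c t :=
  integral_add_adjacent_intervals (intervalIntegrable_Gaux_integrand t a b)
    (intervalIntegrable_Gaux_integrand t b c)

theorem Faux_zero_arcsin {t : ℝ} (ht : 0 ≤ t) : Faux 0 (arcsin t) t = 0 := by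
  have hzero : EqOn (fun x => √(sin x ^ 2 - t ^ 2)) 0 (uIoo 0 (arcsin t)) := by
    intro x hx
    rw [uIoo_of_le (arcsin_nonneg.2 ht)] at hx
    have hsin := sin_mem_Ioc_of_mem_Ioo_arcsin hx
    exact sqrt_eq_zero'.2 (by nlinarith [hsin.1, hsin.2])
  rw [Faux, integral_congr_uIoo hzero]
  simp

theorem Gaux_zero_arcsin {t : ℝ} (ht : 0 ≤ t) : Gaux 0 (arcsin t) t = 0 := by
  have hzero : EqOn (fun x => π / 2 - arcsin (t / sin x)) 0 (uIoo 0 (arcsin t)) := by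
    intro x hx
    rw [uIoo_of_le (arcsin_nonneg.2 ht)] at hx
    have hsin := sin_mem_Ioc_of_mem_Ioo_arcsin hx
    show π / 2 - arcsin (t / sin x) = 0
    rw [arcsin_of_one_le ((one_le_div₀ hsin.1).2 hsin.2), sub_self]
  rw [Gaux, integral_congr_uIoo hzero]
  simp

theorem stmt14 (l b : ℝ) (hb : 0 < b) (hbl : b < l) :
    B3 l b = 2 * l - 2 * l * Faux (Real.arcsin (b / l)) (π / 2) (b / l)
      + 2 * b * Gaux (Real.arcsin (b / l)) (π / 2) (b / l) := by
  have hl : 0 < l := hb.trans hbl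
  set t := b / l
  have ht : 0 ≤ t := div_nonneg hb.le hl.le
  have hinner : EqOn (fun ψ => ∫ φ in (0 : ℝ)..π, min b (l * sin ψ * sin φ))
      (fun ψ => 2 * l * sin ψ - 2 * l * √(sin ψ ^ 2 - t ^ 2)
        + 2 * b * (π / 2 - arcsin (t / sin ψ))) (uIoo 0 (π / 2)) := by
    intro ψ hψ
    rw [uIoo_of_le pi_div_two_pos.le] at hψ
    exact integral_min_mul_mul_sin hb.le hl
      (sin_pos_of_pos_of_lt_pi hψ.1 (by linarith [hψ.2, pi_pos]))
  have hsin : IntervalIntegrable (fun ψ => 2 * l * sin ψ) volume 0 (π / 2) :=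
    (by fun_prop : Continuous fun ψ => 2 * l * sin ψ).intervalIntegrable _ _
  rw [B3, integral_congr_uIoo hinner,
    integral_add (hsin.sub ((intervalIntegrable_Faux_integrand t _ _).const_mul _))
      ((intervalIntegrable_Gaux_integrand t _ _).const_mul _),
    integral_sub hsin ((intervalIntegrable_Faux_integrand t _ _).const_mul _),
    intervalIntegral.integral_const_mul, intervalIntegral.integral_const_mul,
    intervalIntegral.integral_const_mul, integral_sin, ← Faux, ← Gaux,
    ← Faux_add_adjacent 0 (arcsin t), ← Gaux_add_adjacent 0 (arcsin t), Faux_zero_arcsin ht,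
    Gaux_zero_arcsin ht, cos_zero, cos_pi_div_two]
  ring
end
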